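/- Consider the LTI system x_{k+1} = A x_k + B u_k with A ∈ ℝ^{n×n}, B ∈ ℝ^{n×m}, and a data trajectory (u^d, x^d) of length T. If the stacked matrix with rows given by the first states x^d_j (j = 1,…,T−L+1) and the L-depth input Hankel matrix U_{1,L,T−L+1} has full row rank n + mL, then for every length-L input/state trajectory (u, x) of the system there exists g ∈ ℝ^{T−L+1} such that x_{[1,L]} = X_{1,L,T−L+1} g and u_{[1,L]} = U_{1,L,T−L+1} g, where X and U denote the Hankel matrices built from the data. -/
import Mathlib


open Matrix

/-- Depth-`L` Hankel matrix with `C` columns of a `T`-long vector-valued signal: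
the `((i,a), j)` entry is component `a` of the sample at time `i + j` (0-based). -/
def hankel {q T : ℕ} (L C : ℕ) (h : L + C ≤ T + 1) (w : Fin T → Fin q → ℝ) :
    Matrix (Fin L × Fin q) (Fin C) ℝ :=
  fun p j => w ⟨p.1.val + j.val, by have := p.1.isLt; have := j.isLt; omega⟩ p.2

/-- Willems' Fundamental Lemma for LTI systems, direction (i):
under the persistency-of-excitation rank condition on `[X_{1,1,T-L+1}; U_{1,L,T-L+1}]`,
every length-`L` input/state trajectory is a linear combination of the data
Hankel matrices' columns. -/
theorem lti_fundamental_lemma_i {n m L T : ℕ} (hL : 1 ≤ L) (hLT : L ≤ T)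
    (A : Matrix (Fin n) (Fin n) ℝ) (B : Matrix (Fin n) (Fin m) ℝ)
    (ud : Fin T → Fin m → ℝ) (xd : Fin T → Fin n → ℝ)
    (hdata : ∀ k : Fin (T - 1),
      xd ⟨k.val + 1, by have := k.isLt; omega⟩ =
        A *ᵥ xd ⟨k.val, by have := k.isLt; omega⟩
          + B *ᵥ ud ⟨k.val, by have := k.isLt; omega⟩)
    (hrank : Matrix.rank (Matrix.of fun (r : Fin n ⊕ (Fin L × Fin m)) (j : Fin (T - L + 1)) =>
        Sum.elim
          (fun a : Fin n => xd ⟨j.val, by have := j.isLt; omega⟩ a)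
          (fun p : Fin L × Fin m => hankel L (T - L + 1) (by omega) ud p j) r)
      = n + m * L)
    (u : Fin L → Fin m → ℝ) (x : Fin L → Fin n → ℝ)
    (htraj : ∀ i : Fin (L - 1),
      x ⟨i.val + 1, by have := i.isLt; omega⟩ =
        A *ᵥ x ⟨i.val, by have := i.isLt; omega⟩
          + B *ᵥ u ⟨i.val, by have := i.isLt; omega⟩) :
    ∃ g : Fin (T - L + 1) → ℝ,
      (∀ p : Fin L × Fin n, x p.1 p.2 = (hankel L (T - L + 1) (by omega) xd *ᵥ g) p) ∧
      (∀ p : Fin L × Fin m, u p.1 p.2 = (hankel L (T - L + 1) (by omega) ud *ᵥ g) p) := by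
  set M : Matrix (Fin n ⊕ (Fin L × Fin m)) (Fin (T - L + 1)) ℝ :=
    Matrix.of fun (r : Fin n ⊕ (Fin L × Fin m)) (j : Fin (T - L + 1)) =>
      Sum.elim
        (fun a : Fin n => xd ⟨j.val, by have := j.isLt; omega⟩ a)
        (fun p : Fin L × Fin m => hankel L (T - L + 1) (by omega) ud p j) r with hM
  have hsurj : Function.Surjective M.mulVecLin := by
    rw [← LinearMap.range_eq_top]
    apply Submodule.eq_top_of_finrank_eq
    have : Module.finrank ℝ ↥(LinearMap.range M.mulVecLin) = M.rank := rfl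
    rw [this, hrank, Module.finrank_pi]
    simp [Fintype.card_sum, Fintype.card_prod, Nat.mul_comm]
  obtain ⟨g, hg⟩ := hsurj (Sum.elim (fun a => x ⟨0, hL⟩ a) (fun p => u p.1 p.2))
  -- input claim
  have hu : ∀ p : Fin L × Fin m, u p.1 p.2 = (hankel L (T - L + 1) (by omega) ud *ᵥ g) p := by
    intro p
    have := congrFun hg (Sum.inr p)
    simpa [M, Matrix.mulVecLin, Matrix.mulVec, dotProduct] using this.symm
  refine ⟨g, ?_, hu⟩
  have key : ∀ i : ℕ, ∀ hi : i < L, ∀ a : Fin n,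
      x ⟨i, hi⟩ a = (hankel L (T - L + 1) (by omega) xd *ᵥ g) (⟨i, hi⟩, a) := by
    intro i
    induction i with
    | zero =>
      intro hi a
      have := congrFun hg (Sum.inl a)
      simp only [M, Matrix.mulVecLin_apply, Matrix.mulVec, dotProduct,
        Matrix.of_apply, Sum.elim_inl] at this
      rw [← this]
      simp [hankel, Matrix.mulVec, dotProduct]
    | succ i ih =>
      intro hi a
      have hiL : i < L - 1 := by omega
      have hx := htraj ⟨i, hiL⟩
      have hx' : x ⟨i + 1, hi⟩ = A *ᵥ x ⟨i, by omega⟩ + B *ᵥ u ⟨i, by omega⟩ := hx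
      rw [hx']
      have expand : (hankel L (T - L + 1) (by omega) xd *ᵥ g) (⟨i + 1, hi⟩, a)
          = ∑ j : Fin (T - L + 1),
            ((A *ᵥ xd ⟨i + j.val, by have := j.isLt; omega⟩) a
              + (B *ᵥ ud ⟨i + j.val, by have := j.isLt; omega⟩) a) * g j := by
        simp only [Matrix.mulVec, dotProduct, hankel]
        refine Finset.sum_congr rfl fun j _ => ?_
        have hk : i + j.val < T - 1 := by have := j.isLt; omega
        have hd2 := hdata ⟨i + j.val, hk⟩
        have hidx : (⟨i + 1 + j.val, by have := j.isLt; omega⟩ : Fin T)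
            = ⟨i + j.val + 1, by omega⟩ := by
          apply Fin.ext
          simp only [Fin.val_mk]
          omega
        rw [hidx, hd2]
        simp [Matrix.mulVec, dotProduct]
      rw [expand]
      have hA : ∀ a : Fin n, (A *ᵥ x ⟨i, by omega⟩) a
          = ∑ j : Fin (T - L + 1), (A *ᵥ xd ⟨i + j.val, by have := j.isLt; omega⟩) a * g j := by
        intro a
        simp only [Matrix.mulVec, dotProduct]
        calc ∑ b, A a b * x ⟨i, by omega⟩ b
            = ∑ b, ∑ j : Fin (T - L + 1),
                A a b * (xd ⟨i + j.val, by have := j.isLt; omega⟩ b * g j) := by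
              refine Finset.sum_congr rfl fun b _ => ?_
              rw [ih (by omega) b]
              simp [hankel, Matrix.mulVec, dotProduct, Finset.mul_sum]
          _ = ∑ j : Fin (T - L + 1), ∑ b,
                A a b * (xd ⟨i + j.val, by have := j.isLt; omega⟩ b * g j) :=
              Finset.sum_comm
          _ = ∑ j : Fin (T - L + 1),
                (∑ b, A a b * xd ⟨i + j.val, by have := j.isLt; omega⟩ b) * g j := by
              simp [Finset.sum_mul, mul_assoc]
      have hB : ∀ a : Fin n, (B *ᵥ u ⟨i, by omega⟩) a
          = ∑ j : Fin (T - L + 1), (B *ᵥ ud ⟨i + j.val, by have := j.isLt; omega⟩) a * g j := by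
        intro a
        simp only [Matrix.mulVec, dotProduct]
        calc ∑ c, B a c * u ⟨i, by omega⟩ c
            = ∑ c, ∑ j : Fin (T - L + 1),
                B a c * (ud ⟨i + j.val, by have := j.isLt; omega⟩ c * g j) := by
              refine Finset.sum_congr rfl fun c _ => ?_
              rw [hu (⟨i, by omega⟩, c)]
              simp [hankel, Matrix.mulVec, dotProduct, Finset.mul_sum]
          _ = ∑ j : Fin (T - L + 1), ∑ c,
                B a c * (ud ⟨i + j.val, by have := j.isLt; omega⟩ c * g j) :=
              Finset.sum_comm
          _ = ∑ j : Fin (T - L + 1),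
                (∑ c, B a c * ud ⟨i + j.val, by have := j.isLt; omega⟩ c) * g j := by
              simp [Finset.sum_mul, mul_assoc]
      simp only [Pi.add_apply, hA, hB, add_mul, Finset.sum_add_distrib]
  intro p
  have := key p.1.val p.1.isLt p.2
  simpa using this
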